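/- Let R be a commutative ring and F ∈ R. Let W⁰, W¹, V⁰, V¹ be R-modules, set M⁰ = W⁰ ⊕ V⁰ and M¹ = W¹ ⊕ V¹, and let D¹⁰ : M⁰ → M¹ and D⁰¹ : M¹ → M⁰ be R-linear maps with D⁰¹ ∘ D¹⁰ = F·id_{M⁰} and D¹⁰ ∘ D⁰¹ = F·id_{M¹}. Write the block components of D¹⁰ as d_{WW}¹⁰ : W⁰ → W¹, d_{WV}¹⁰ : V⁰ → W¹, d_{VW}¹⁰ : W⁰ → V¹, φ := d_{VV}¹⁰ : V⁰ → V¹, and similarly for D⁰¹, and assume φ is an isomorphism. Define D_W¹⁰ = d_{WW}¹⁰ − d_{WV}¹⁰ ∘ φ⁻¹ ∘ d_{VW}¹⁰ and D_W⁰¹ = d_{WW}⁰¹. Then: (1) D_W⁰¹ ∘ D_W¹⁰ = F·id_{W⁰} and D_W¹⁰ ∘ D_W⁰¹ = F·id_{W¹}; (2) there exist grading-preserving R-linear maps ι : W⁰ ⊕ W¹ → M⁰ ⊕ M¹ and π : M⁰ ⊕ M¹ → W⁰ ⊕ W¹ intertwining the differentials (D ∘ ι = ι ∘ D_W and D_W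 ∘ π = π ∘ D) such that π ∘ ι = id, together with an odd R-linear map χ : M⁰ ⊕ M¹ → M⁰ ⊕ M¹ with id − ι ∘ π = D ∘ χ + χ ∘ D. In particular (M, D) and (W, D_W) are homotopy equivalent matrix factorizations of F. -/

import Mathlib

/-!
Since `D² = F`, the off-diagonal blocks of `D⁰¹` are determined by those of `D¹⁰`:
`d_{WV}⁰¹ = -d_{WW}⁰¹ ∘ d_{WV}¹⁰ ∘ φ⁻¹` and `d_{VW}⁰¹ = -φ⁻¹ ∘ d_{VW}¹⁰ ∘ d_{WW}⁰¹`.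
Substituting them into the `WW` blocks of `D² = F` gives `D_W² = F`. The maps
`ι⁰ = (1, -φ⁻¹ ∘ d_{VW}¹⁰)` and `π¹ = (1, -d_{WV}¹⁰ ∘ φ⁻¹)` come from the triangular change of
basis that makes `D` block diagonal, `D ≅ D_W ⊕ φ`; the summand `φ : V⁰ ≅ V¹` is contracted by
the homotopy `φ⁻¹`.
-/

section GaussElimination

variable {R : Type*} [CommRing R]
variable {W0 W1 V0 V1 : Type*}
variable [AddCommGroup W0] [AddCommGroup W1] [AddCommGroup V0] [AddCommGroup V1]
variable [Module R W0] [Module R W1] [Module R V0] [Module R V1]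

/-- The block component `d_{WW}¹⁰ : W⁰ → W¹` of `D¹⁰ : W⁰ ⊕ V⁰ → W¹ ⊕ V¹`. -/
def dWW10 (D10 : W0 × V0 →ₗ[R] W1 × V1) : W0 →ₗ[R] W1 :=
  (LinearMap.fst R W1 V1).comp (D10.comp (LinearMap.inl R W0 V0))

/-- The block component `d_{WV}¹⁰ : V⁰ → W¹`. -/
def dWV10 (D10 : W0 × V0 →ₗ[R] W1 × V1) : V0 →ₗ[R] W1 :=
  (LinearMap.fst R W1 V1).comp (D10.comp (LinearMap.inr R W0 V0))

/-- The block component `d_{VW}¹⁰ : W⁰ → V¹`. -/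
def dVW10 (D10 : W0 × V0 →ₗ[R] W1 × V1) : W0 →ₗ[R] V1 :=
  (LinearMap.snd R W1 V1).comp (D10.comp (LinearMap.inl R W0 V0))

/-- The block component `φ = d_{VV}¹⁰ : V⁰ → V¹`. -/
def phiVV (D10 : W0 × V0 →ₗ[R] W1 × V1) : V0 →ₗ[R] V1 :=
  (LinearMap.snd R W1 V1).comp (D10.comp (LinearMap.inr R W0 V0))

/-- The block component `d_{WW}⁰¹ : W¹ → W⁰` of `D⁰¹`. -/
def dWW01 (D01 : W1 × V1 →ₗ[R] W0 × V0) : W1 →ₗ[R] W0 :=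
  (LinearMap.fst R W0 V0).comp (D01.comp (LinearMap.inl R W1 V1))

/-- The reduced differential `D_W¹⁰ = d_{WW}¹⁰ − d_{WV}¹⁰ ∘ φ⁻¹ ∘ d_{VW}¹⁰`. -/
def DW10 (D10 : W0 × V0 →ₗ[R] W1 × V1) (φinv : V1 →ₗ[R] V0) : W0 →ₗ[R] W1 :=
  dWW10 D10 - (dWV10 D10).comp (φinv.comp (dVW10 D10))

open LinearMap

-- The block maps are generic: `dWV10 D01`, `dVW10 D01`, `phiVV D01` are the other blocks of `D⁰¹`.
theorem dWW01_eq_dWW10 (D01 : W1 × V1 →ₗ[R] W0 × V0) : dWW01 D01 = dWW10 D01 := rfl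

theorem fst_comp_eq_blocks (f : W0 × V0 →ₗ[R] W1 × V1) :
    fst R W1 V1 ∘ₗ f = dWW10 f ∘ₗ fst R W0 V0 + dWV10 f ∘ₗ snd R W0 V0 := by
  ext <;> simp [dWW10, dWV10, Prod.mk_zero_zero]

theorem comp_inl_eq_blocks (f : W0 × V0 →ₗ[R] W1 × V1) :
    f ∘ₗ inl R W0 V0 = inl R W1 V1 ∘ₗ dWW10 f + inr R W1 V1 ∘ₗ dVW10 f := by
  ext <;> simp [dWW10, dVW10]

theorem comp_inr_eq_blocks (f : W0 × V0 →ₗ[R] W1 × V1) :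
    f ∘ₗ inr R W0 V0 = inl R W1 V1 ∘ₗ dWV10 f + inr R W1 V1 ∘ₗ phiVV f := by
  ext <;> simp [dWV10, phiVV]

theorem apply_eq_blocks (f : W0 × V0 →ₗ[R] W1 × V1) (w : W0) (v : V0) :
    f (w, v) = (dWW10 f w + dWV10 f v, dVW10 f w + phiVV f v) := by
  rw [show (w, v) = (w, 0) + (0, v) by simp, map_add]
  ext <;> simp [dWW10, dWV10, dVW10, phiVV]

section BlockComposition

variable {X Y : Type*} [AddCommGroup X] [AddCommGroup Y] [Module R X] [Module R Y]
variable (f : W0 × V0 →ₗ[R] W1 × V1) (g : W1 × V1 →ₗ[R] X × Y)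

theorem dWW10_comp : dWW10 (g ∘ₗ f) = dWW10 g ∘ₗ dWW10 f + dWV10 g ∘ₗ dVW10 f := by
  rw [dWW10, comp_assoc, comp_inl_eq_blocks, comp_add, comp_add]
  rfl

theorem dWV10_comp : dWV10 (g ∘ₗ f) = dWW10 g ∘ₗ dWV10 f + dWV10 g ∘ₗ phiVV f := by
  rw [dWV10, comp_assoc, comp_inr_eq_blocks, comp_add, comp_add]
  rfl

theorem dVW10_comp : dVW10 (g ∘ₗ f) = dVW10 g ∘ₗ dWW10 f + phiVV g ∘ₗ dVW10 f := by
  rw [dVW10, comp_assoc, comp_inl_eq_blocks, comp_add, comp_add]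
  rfl

end BlockComposition

theorem dWW10_smul_id (F : R) :
    dWW10 (F • LinearMap.id : W0 × V0 →ₗ[R] W0 × V0) = F • LinearMap.id := by
  ext; simp [dWW10]

theorem dWV10_smul_id (F : R) : dWV10 (F • LinearMap.id : W0 × V0 →ₗ[R] W0 × V0) = 0 := by
  ext; simp [dWV10]

theorem dVW10_smul_id (F : R) : dVW10 (F • LinearMap.id : W0 × V0 →ₗ[R] W0 × V0) = 0 := by
  ext; simp [dVW10]


def gaussInclusion (D10 : W0 × V0 →ₗ[R] W1 × V1) (φinv : V1 →ₗ[R] V0) :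
    W0 →ₗ[R] W0 × V0 :=
  inl R W0 V0 - inr R W0 V0 ∘ₗ φinv ∘ₗ dVW10 D10

def gaussProjection (D10 : W0 × V0 →ₗ[R] W1 × V1) (φinv : V1 →ₗ[R] V0) :
    W1 × V1 →ₗ[R] W1 :=
  fst R W1 V1 - dWV10 D10 ∘ₗ φinv ∘ₗ snd R W1 V1

def gaussHomotopy (φinv : V1 →ₗ[R] V0) : W1 × V1 →ₗ[R] W0 × V0 :=
  inr R W0 V0 ∘ₗ φinv ∘ₗ snd R W1 V1

section Reduction

variable {F : R} {D10 : W0 × V0 →ₗ[R] W1 × V1} {D01 : W1 × V1 →ₗ[R] W0 × V0}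
  {φinv : V1 →ₗ[R] V0}

theorem dWV10_eq_of_comp_eq_smul_id (hD0 : D01 ∘ₗ D10 = F • LinearMap.id)
    (hφ1 : phiVV D10 ∘ₗ φinv = LinearMap.id) :
    dWV10 D01 = -(dWW01 D01 ∘ₗ dWV10 D10 ∘ₗ φinv) := by
  have h := congrArg dWV10 hD0
  rw [dWV10_comp, dWV10_smul_id] at h
  calc dWV10 D01 = (dWV10 D01 ∘ₗ phiVV D10) ∘ₗ φinv := by rw [comp_assoc, hφ1, comp_id]
    _ = _ := by rw [eq_neg_of_add_eq_zero_right h, neg_comp]; rfl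

theorem dVW10_eq_of_comp_eq_smul_id (hD1 : D10 ∘ₗ D01 = F • LinearMap.id)
    (hφ2 : φinv ∘ₗ phiVV D10 = LinearMap.id) :
    dVW10 D01 = -(φinv ∘ₗ dVW10 D10 ∘ₗ dWW01 D01) := by
  have h := congrArg dVW10 hD1
  rw [dVW10_comp, dVW10_smul_id] at h
  calc dVW10 D01 = φinv ∘ₗ phiVV D10 ∘ₗ dVW10 D01 := by rw [← comp_assoc, hφ2, id_comp]
    _ = _ := by rw [eq_neg_of_add_eq_zero_right h, comp_neg]; rfl

theorem dWW01_comp_DW10 (hD0 : D01 ∘ₗ D10 = F • LinearMap.id)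
    (hφ1 : phiVV D10 ∘ₗ φinv = LinearMap.id) :
    dWW01 D01 ∘ₗ DW10 D10 φinv = F • LinearMap.id := by
  have h := congrArg dWW10 hD0
  rw [dWW10_comp, dWW10_smul_id, dWV10_eq_of_comp_eq_smul_id hD0 hφ1, neg_comp] at h
  rw [DW10, comp_sub, ← h, sub_eq_add_neg]
  rfl

theorem DW10_comp_dWW01 (hD1 : D10 ∘ₗ D01 = F • LinearMap.id)
    (hφ2 : φinv ∘ₗ phiVV D10 = LinearMap.id) :
    DW10 D10 φinv ∘ₗ dWW01 D01 = F • LinearMap.id := by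
  have h := congrArg dWW10 hD1
  rw [dWW10_comp, dWW10_smul_id, dVW10_eq_of_comp_eq_smul_id hD1 hφ2, comp_neg] at h
  rw [DW10, sub_comp, ← h, sub_eq_add_neg]
  rfl

theorem comp_gaussInclusion (hφ1 : phiVV D10 ∘ₗ φinv = LinearMap.id) :
    D10 ∘ₗ gaussInclusion D10 φinv = inl R W1 V1 ∘ₗ DW10 D10 φinv := by
  ext w
  · simp [gaussInclusion, DW10, apply_eq_blocks D10, sub_eq_add_neg]
  · have hφ1' : ∀ v, phiVV D10 (φinv v) = v := LinearMap.congr_fun hφ1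
    simp [gaussInclusion, apply_eq_blocks D10, hφ1']

theorem comp_inl_eq_gaussInclusion_comp (hD1 : D10 ∘ₗ D01 = F • LinearMap.id)
    (hφ2 : φinv ∘ₗ phiVV D10 = LinearMap.id) :
    D01 ∘ₗ inl R W1 V1 = gaussInclusion D10 φinv ∘ₗ dWW01 D01 := by
  rw [comp_inl_eq_blocks, gaussInclusion, sub_comp, dVW10_eq_of_comp_eq_smul_id hD1 hφ2]
  ext <;> simp [dWW01_eq_dWW10]

theorem DW10_comp_fst (hφ2 : φinv ∘ₗ phiVV D10 = LinearMap.id) :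
    DW10 D10 φinv ∘ₗ fst R W0 V0 = gaussProjection D10 φinv ∘ₗ D10 := by
  have hφ2' : ∀ v, φinv (phiVV D10 v) = v := LinearMap.congr_fun hφ2
  ext <;> simp [gaussProjection, DW10, apply_eq_blocks D10, hφ2']

theorem dWW01_comp_gaussProjection (hD0 : D01 ∘ₗ D10 = F • LinearMap.id)
    (hφ1 : phiVV D10 ∘ₗ φinv = LinearMap.id) :
    dWW01 D01 ∘ₗ gaussProjection D10 φinv = fst R W0 V0 ∘ₗ D01 := by
  rw [fst_comp_eq_blocks, dWV10_eq_of_comp_eq_smul_id hD0 hφ1, gaussProjection, comp_sub,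
    sub_eq_add_neg, neg_comp, dWW01_eq_dWW10]
  rfl

theorem fst_comp_gaussInclusion : fst R W0 V0 ∘ₗ gaussInclusion D10 φinv = LinearMap.id := by
  ext; simp [gaussInclusion]

theorem gaussProjection_comp_inl : gaussProjection D10 φinv ∘ₗ inl R W1 V1 = LinearMap.id := by
  ext; simp [gaussProjection]

theorem id_sub_gaussInclusion_comp_fst (hφ2 : φinv ∘ₗ phiVV D10 = LinearMap.id) :
    LinearMap.id - gaussInclusion D10 φinv ∘ₗ fst R W0 V0 = gaussHomotopy φinv ∘ₗ D10 := by
  have hφ2' : ∀ v, φinv (phiVV D10 v) = v := LinearMap.congr_fun hφ2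
  ext <;> simp [gaussInclusion, gaussHomotopy, apply_eq_blocks D10, hφ2']

theorem id_sub_inl_comp_gaussProjection (hφ1 : phiVV D10 ∘ₗ φinv = LinearMap.id) :
    LinearMap.id - inl R W1 V1 ∘ₗ gaussProjection D10 φinv = D10 ∘ₗ gaussHomotopy φinv := by
  have hφ1' : ∀ v, phiVV D10 (φinv v) = v := LinearMap.congr_fun hφ1
  ext <;> simp [gaussProjection, gaussHomotopy, apply_eq_blocks D10, hφ1']

end Reduction

/-- **Gauss elimination for matrix factorizations.**  If `(M⁰ = W⁰ ⊕ V⁰, M¹ = W¹ ⊕ V¹, D)`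
is a matrix factorization of `F` whose component `φ = d_{VV}¹⁰ : V⁰ → V¹` is an isomorphism
(with inverse `φinv`), then the reduced differentials `D_W¹⁰, D_W⁰¹` form a matrix
factorization of `F` on `W⁰ ⊕ W¹`, and `(M, D)` and `(W, D_W)` are homotopy equivalent:
there are grading-preserving maps `ι`, `π` intertwining the differentials with `π ∘ ι = id`
and an odd homotopy `χ` with `id − ι ∘ π = D ∘ χ + χ ∘ D`. -/
theorem gauss_elimination_matrix_factorization (F : R)
    (D10 : W0 × V0 →ₗ[R] W1 × V1) (D01 : W1 × V1 →ₗ[R] W0 × V0)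
    (hD0 : D01.comp D10 = F • (LinearMap.id : W0 × V0 →ₗ[R] W0 × V0))
    (hD1 : D10.comp D01 = F • (LinearMap.id : W1 × V1 →ₗ[R] W1 × V1))
    (φinv : V1 →ₗ[R] V0)
    (hφ1 : (phiVV D10).comp φinv = LinearMap.id)
    (hφ2 : φinv.comp (phiVV D10) = LinearMap.id) :
    ((dWW01 D01).comp (DW10 D10 φinv) = F • (LinearMap.id : W0 →ₗ[R] W0)) ∧
    ((DW10 D10 φinv).comp (dWW01 D01) = F • (LinearMap.id : W1 →ₗ[R] W1)) ∧
    ∃ (ι0 : W0 →ₗ[R] W0 × V0) (ι1 : W1 →ₗ[R] W1 × V1)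
      (π0 : W0 × V0 →ₗ[R] W0) (π1 : W1 × V1 →ₗ[R] W1)
      (χ0 : W0 × V0 →ₗ[R] W1 × V1) (χ1 : W1 × V1 →ₗ[R] W0 × V0),
      D10.comp ι0 = ι1.comp (DW10 D10 φinv) ∧
      D01.comp ι1 = ι0.comp (dWW01 D01) ∧
      (DW10 D10 φinv).comp π0 = π1.comp D10 ∧
      (dWW01 D01).comp π1 = π0.comp D01 ∧
      π0.comp ι0 = LinearMap.id ∧
      π1.comp ι1 = LinearMap.id ∧
      (LinearMap.id : W0 × V0 →ₗ[R] W0 × V0) - ι0.comp π0 = D01.comp χ0 + χ1.comp D10 ∧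
      (LinearMap.id : W1 × V1 →ₗ[R] W1 × V1) - ι1.comp π1 = D10.comp χ1 + χ0.comp D01 := by
  refine ⟨dWW01_comp_DW10 hD0 hφ1, DW10_comp_dWW01 hD1 hφ2, gaussInclusion D10 φinv,
    inl R W1 V1, fst R W0 V0, gaussProjection D10 φinv, 0, gaussHomotopy φinv,
    comp_gaussInclusion hφ1, comp_inl_eq_gaussInclusion_comp hD1 hφ2, DW10_comp_fst hφ2,
    dWW01_comp_gaussProjection hD0 hφ1, fst_comp_gaussInclusion, gaussProjection_comp_inl,
    ?_, ?_⟩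
  · rw [comp_zero, zero_add, id_sub_gaussInclusion_comp_fst hφ2]
  · rw [zero_comp, add_zero, id_sub_inl_comp_gaussProjection hφ1]

end GaussElimination
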